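/- arXiv:2407.06848 — 6 statements merged into one kernel-verified Lean document; each statement's English description precedes it below -/
import Mathlib

section
/- There exists an uncountable subset E of the one-sided shift space Σ_2 = {0,1}^ℕ such that for any two distinct points s = s_0 s_1 ... and t = t_0 t_1 ... in E, one has s_n = t_n for infinitely many n, and s_m ≠ t_m for infinitely many m. -/
private def phi (a : ℕ → Fin 2) : ℕ → Fin 2 := fun n => a n.unpair.1

private lemma phi_pair (a : ℕ → Fin 2) (i j : ℕ) : phi a (Nat.pair i j) = a i := by
  simp [phi, Nat.unpair_pair]

private lemma phi_inj : Function.Injective phi := by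
  intro a b h
  funext i
  have := congrFun h (Nat.pair i 0)
  simpa [phi_pair] using this

private lemma zero_set_uncountable : ¬ ({a : ℕ → Fin 2 | a 0 = 0}).Countable := by
  intro hc
  have hψ : Function.Injective
      (fun b : ℕ → Fin 2 => (fun n => if n = 0 then (0 : Fin 2) else b (n - 1))) := by
    intro b c h
    funext k
    have := congrFun h (k + 1)
    simpa using this
  have hsub : Set.range (fun b : ℕ → Fin 2 =>
      (fun n => if n = 0 then (0 : Fin 2) else b (n - 1))) ⊆ {a : ℕ → Fin 2 | a 0 = 0} := by
    rintro _ ⟨b, rfl⟩; simp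
  have hcr : (Set.range (fun b : ℕ → Fin 2 =>
      (fun n => if n = 0 then (0 : Fin 2) else b (n - 1)))).Countable := hc.mono hsub
  haveI : Countable (ℕ → Fin 2) := by
    haveI := hcr.to_subtype
    exact Countable.of_equiv _ (Equiv.ofInjective _ hψ).symm
  classical
  haveI : Countable (Set ℕ) := by
    have hχ : Function.Injective
        (fun S : Set ℕ => (fun n => if n ∈ S then (1 : Fin 2) else 0)) := by
      intro S T h
      ext n
      have := congrFun h n
      by_cases hS : n ∈ S <;> by_cases hT : n ∈ T <;> simp_all
    exact hχ.countable
  obtain ⟨f, hf⟩ := (Countable.exists_injective_nat (Set ℕ))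
  exact Function.cantor_injective f hf

/-- There exists an uncountable subset `E` of the one-sided shift space `Σ₂ = {0,1}^ℕ` such
that any two distinct members `s, t` of `E` agree at infinitely many coordinates and differ
at infinitely many coordinates. -/
theorem exists_uncountable_agree_and_differ_infinitely :
    ∃ E : Set (ℕ → Fin 2), ¬ E.Countable ∧
      ∀ s ∈ E, ∀ t ∈ E, s ≠ t →
        {n : ℕ | s n = t n}.Infinite ∧ {m : ℕ | s m ≠ t m}.Infinite := by
  refine ⟨phi '' {a | a 0 = 0}, ?_, ?_⟩
  · intro hc
    exact zero_set_uncountable ((hc.preimage phi_inj).mono (Set.subset_preimage_image _ _))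
  · rintro _ ⟨a, ha, rfl⟩ _ ⟨b, hb, rfl⟩ hne
    have hab : a ≠ b := fun h => hne (by rw [h])
    obtain ⟨i, hi⟩ := Function.ne_iff.mp hab
    constructor
    · apply Set.infinite_of_injective_forall_mem (f := fun j => Nat.pair 0 j)
      · intro x y h
        have := congrArg (fun n => n.unpair.2) h
        simpa [Nat.unpair_pair] using this
      · intro j
        simp only [Set.mem_setOf_eq, phi_pair]
        rw [ha, hb]
    · apply Set.infinite_of_injective_forall_mem (f := fun j => Nat.pair i j)
      · intro x y h
        have := congrArg (fun n => n.unpair.2) h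
        simpa [Nat.unpair_pair] using this
      · intro j
        simpa only [Set.mem_setOf_eq, phi_pair] using hi
end

section
/- Let F be a multiple mapping on a compact metric space X with R(F^{N+1}) = R(F^N) for some N and F(X) = X. If F is transitive, then for any nonempty open sets U, V ⊆ X with V ∩ R_a(F) ≠ ∅ and any k > 0, there exists n > k with F^n(U) ∩ e(V) ≠ ∅. -/
open Set Metric Filter TopologicalSpace

/-- The set of all `n`-fold compositions of members of `F = {f 0, …, f (m-1)}` applied to `x`. -/
def iterSet {X : Type*} {m : ℕ} (f : Fin m → X → X) : ℕ → X → Set X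
  | 0, x => {x}
  | n + 1, x => ⋃ i, iterSet f n (f i x)

lemma iterSet_finite {X : Type*} {m : ℕ} (f : Fin m → X → X) (n : ℕ) (x : X) :
    (iterSet f n x).Finite := by
  induction n generalizing x with
  | zero => exact Set.finite_singleton x
  | succ n ih => exact Set.finite_iUnion fun i => ih _

lemma iterSet_nonempty {X : Type*} {m : ℕ} (hm : 0 < m) (f : Fin m → X → X) (n : ℕ) (x : X) :
    (iterSet f n x).Nonempty := by
  induction n generalizing x with
  | zero => exact ⟨x, rfl⟩
  | succ n ih =>
      obtain ⟨y, hy⟩ := ih (f ⟨0, hm⟩ x)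
      exact ⟨y, Set.mem_iUnion.2 ⟨⟨0, hm⟩, hy⟩⟩

/-- `F^n(x)` as an element of the hyperspace of nonempty compact subsets. -/
noncomputable def iterNC {X : Type*} [MetricSpace X] {m : ℕ} (hm : 0 < m)
    (f : Fin m → X → X) (n : ℕ) (x : X) : NonemptyCompacts X :=
  ⟨⟨iterSet f n x, (iterSet_finite f n x).isCompact⟩, iterSet_nonempty hm f n x⟩

/-- `F` is transitive: for all nonempty open `U V ⊆ X` with `V ∩ R_a(F) ≠ ∅`
(i.e. some value `F^N(z)` of the stable range lies inside `V`), there exist `n ∈ ℕ`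
and `x ∈ U` with `F^n(x) ⊆ V` (i.e. `F^n(U) ∩ e(V) ≠ ∅`). -/
def TransitiveMM {X : Type*} [MetricSpace X] {m : ℕ} (f : Fin m → X → X) (N : ℕ) : Prop :=
  ∀ U V : Set X, IsOpen U → U.Nonempty → IsOpen V → V.Nonempty →
    (∃ z : X, iterSet f N z ⊆ V) →
    ∃ n : ℕ, 0 < n ∧ ∃ x ∈ U, iterSet f n x ⊆ V

/-- `F` is (topologically) mixing: for all nonempty open `U V ⊆ X` with `V ∩ R_a(F) ≠ ∅`,
there is `N'` such that for every `n ≥ N'` there is `x ∈ U` with `F^n(x) ⊆ V`. -/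
def MixingMM {X : Type*} [MetricSpace X] {m : ℕ} (f : Fin m → X → X) (N : ℕ) : Prop :=
  ∀ U V : Set X, IsOpen U → U.Nonempty → IsOpen V → V.Nonempty →
    (∃ z : X, iterSet f N z ⊆ V) →
    ∃ N' : ℕ, 0 < N' ∧ ∀ n : ℕ, N' ≤ n → ∃ x ∈ U, iterSet f n x ⊆ V


lemma iterSet_add' {X : Type*} {m : ℕ} (f : Fin m → X → X) (a b : ℕ) (x : X) :
    iterSet f (a + b) x = ⋃ y ∈ iterSet f b x, iterSet f a y := by
  induction b generalizing x with
  | zero => simp [iterSet]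
  | succ b ih =>
      show iterSet f ((a + b) + 1) x = _
      simp only [iterSet, ih]
      ext w
      simp [iterSet]
      tauto

lemma isOpen_iterSet_pre {X : Type*} [TopologicalSpace X] {m : ℕ} (f : Fin m → X → X)
    (hf : ∀ i, Continuous (f i)) (n : ℕ) {V : Set X} (hV : IsOpen V) :
    IsOpen {y : X | iterSet f n y ⊆ V} := by
  induction n with
  | zero => simpa [iterSet] using hV
  | succ n ih =>
      have : {y : X | iterSet f (n+1) y ⊆ V} = ⋂ i, (f i) ⁻¹' {y | iterSet f n y ⊆ V} := by
        ext y; simp [iterSet, Set.iUnion_subset_iff]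
      rw [this]
      exact isOpen_iInter_of_finite fun i => (ih).preimage (hf i)

lemma stab_iter {X : Type*} {m : ℕ} (f : Fin m → X → X) (N : ℕ)
    (hstab : {S : Set X | ∃ x : X, S = iterSet f (N + 1) x}
      = {S : Set X | ∃ x : X, S = iterSet f N x}) :
    ∀ (j : ℕ) (x : X), ∃ x', iterSet f (N + j) x' = iterSet f N x := by
  intro j
  induction j with
  | zero => exact fun x => ⟨x, rfl⟩
  | succ j ih =>
      intro x
      obtain ⟨x₁, hx₁⟩ := ih x
      have hmem : iterSet f N x₁ ∈ {S : Set X | ∃ y : X, S = iterSet f (N + 1) y} := by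
        rw [hstab]; exact ⟨x₁, rfl⟩
      obtain ⟨x₂, hx₂⟩ := hmem
      refine ⟨x₂, ?_⟩
      rw [show N + (j + 1) = j + (N + 1) by omega, iterSet_add', ← hx₂, ← iterSet_add',
        show j + N = N + j by omega, hx₁]

/-- If a multiple mapping `F` on a compact metric space with stable range and `F(X) = X`
is transitive, then for all nonempty open `U, V ⊆ X` with `V ∩ R_a(F) ≠ ∅` and every
`k > 0` there exists `n > k` with `F^n(U) ∩ e(V) ≠ ∅`. -/
theorem transitive_large_times {X : Type*} [MetricSpace X] [CompactSpace X] {m : ℕ}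
    (hm : 0 < m) (f : Fin m → X → X) (hf : ∀ i, Continuous (f i)) (N : ℕ)
    (hstab : {S : Set X | ∃ x : X, S = iterSet f (N + 1) x}
      = {S : Set X | ∃ x : X, S = iterSet f N x})
    (hsurj : (⋃ x : X, iterSet f 1 x) = Set.univ)
    (htrans : TransitiveMM f N) :
    ∀ U V : Set X, IsOpen U → U.Nonempty → IsOpen V → V.Nonempty →
      (∃ z : X, iterSet f N z ⊆ V) →
      ∀ k : ℕ, 0 < k → ∃ n : ℕ, k < n ∧ ∃ x ∈ U, iterSet f n x ⊆ V := by
  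
  intro U V hU hUne hV hVne hVR k hk
  obtain ⟨z₀, hz₀⟩ := hVR
  set W : Set X := {y : X | iterSet f (k + 1) y ⊆ V} with hWdef
  obtain ⟨z, hz⟩ := stab_iter f N hstab (k + 1) z₀
  have hWz : iterSet f N z ⊆ W := by
    intro y hy
    have h1 : iterSet f (k + 1) y ⊆ iterSet f ((k + 1) + N) z := by
      rw [iterSet_add' f (k + 1) N z]
      exact Set.subset_biUnion_of_mem hy
    have h2 : ((k + 1) + N) = N + (k + 1) := by omega
    rw [h2, hz] at h1
    exact fun w hw => hz₀ (h1 hw)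
  have hWne : W.Nonempty := by
    obtain ⟨y, hy⟩ := iterSet_nonempty hm f N z
    exact ⟨y, hWz hy⟩
  obtain ⟨n₀, hn₀, x, hx, hxW⟩ := htrans U W hU hUne
    (isOpen_iterSet_pre f hf (k + 1) hV) hWne ⟨z, hWz⟩
  refine ⟨(k + 1) + n₀, by omega, x, hx, ?_⟩
  rw [iterSet_add']
  exact Set.iUnion₂_subset fun y hy => hxW hy
end

section
/- Let f_2 : [0,1] → [0,1] be the tent map (f_2(x) = 2x for x ≤ 1/2, 2 − 2x for x > 1/2) and f_1 ≡ 0. For the multiple mapping F = {f_1, f_2}, the range of F^n satisfies F^n(x) = {0} ∪ {f_2^j(x) : 1 ≤ j ≤ n} ... in particular R(F^n) ⊆ { {0} ∪ S : S finite set of iterates of x under f_2 }, and F is topologically mixing in the multiple-mapping sense. -/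
open Set Metric Filter TopologicalSpace

/-- The unit interval `[0,1]` as a (compact) metric space. -/
abbrev UnitI : Type := Set.Icc (0 : ℝ) 1

/-- The tent map `x ↦ 2x` on `[0,1/2]`, `x ↦ 2 - 2x` on `(1/2,1]`, i.e. `min (2x) (2-2x)`. -/
noncomputable def tentMap : UnitI → UnitI := fun x =>
  ⟨min (2 * (x : ℝ)) (2 - 2 * (x : ℝ)), by
    obtain ⟨hx0, hx1⟩ := x.2
    constructor
    · exact le_min (by linarith) (by linarith)
    · rcases le_total (x : ℝ) (1 / 2) with h | h
      · exact min_le_of_left_le (by linarith)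
      · exact min_le_of_right_le (by linarith)⟩

/-- The zero point of `[0,1]`. -/
noncomputable def zeroI : UnitI := ⟨0, by constructor <;> norm_num⟩

/-- The constant map `f₁ ≡ 0` on `[0,1]`. -/
noncomputable def zeroMap : UnitI → UnitI := fun _ => zeroI

/-!
Since `f₁ ≡ 0` and `0` is fixed by the tent map `T`, every branch of `F^n` that uses `f₁` ends
at `0`, so `F^n(x) ⊆ {0, T^n x}`. Every value `F(z)` contains `0`, so an open `V` meeting the
stable range contains `0`. A dyadic point `k / 2^m ∈ [0,1]` is sent to `0` by `T^(m+1)`, and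
these points are `2^(-m)`-dense, so for all large `n` every nonempty open `U` contains a point
`x` with `F^n(x) = {0} ⊆ V`.
-/

section IterSet

variable {X : Type*}

lemma iterSet_subset_singleton_of_forall_fixed {m : ℕ} {f : Fin m → X → X} {c : X}
    (hc : ∀ i, f i c = c) (n : ℕ) : iterSet f n c ⊆ {c} := by
  induction n with
  | zero => exact subset_rfl
  | succ n ih => simpa only [iterSet, hc] using iUnion_subset fun _ => ih

lemma iterSet_const_pair_subset {c : X} {T : X → X} (hc : T c = c) (n : ℕ) (x : X) :
    iterSet ![fun _ => c, T] n x ⊆ {c, T^[n] x} := by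
  induction n generalizing x with
  | zero => exact subset_insert _ _
  | succ n ih =>
    have hfixed : ∀ i, (![fun _ => c, T] : Fin 2 → X → X) i c = c := by
      intro i; fin_cases i <;> simp [hc]
    simp only [iterSet, iUnion_subset_iff, Fin.forall_fin_two, Matrix.cons_val_zero,
      Matrix.cons_val_one, Function.iterate_succ_apply]
    exact ⟨(iterSet_subset_singleton_of_forall_fixed hfixed n).trans
      (singleton_subset_iff.2 (mem_insert c _)), ih (T x)⟩

lemma const_mem_iterSet_one_const_pair (c : X) (T : X → X) (z : X) :
    c ∈ iterSet ![fun _ => c, T] 1 z :=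
  mem_iUnion.2 ⟨0, rfl⟩

lemma mixingMM_const_pair [MetricSpace X] {c : X} {T : X → X} (hc : T c = c)
    (hT : ∀ U : Set X, IsOpen U → U.Nonempty → ∀ᶠ n in atTop, ∃ x ∈ U, T^[n] x = c) :
    MixingMM ![fun _ => c, T] 1 := by
  rintro U V hU hUne - - ⟨z, hzV⟩
  have hcV : c ∈ V := hzV (const_mem_iterSet_one_const_pair c T z)
  obtain ⟨N, hN⟩ := eventually_atTop.1 (hT U hU hUne)
  refine ⟨N + 1, N.succ_pos, fun n hn => ?_⟩
  obtain ⟨x, hxU, hx⟩ := hN n (by omega)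
  refine ⟨x, hxU, (iterSet_const_pair_subset hc n x).trans ?_⟩
  simpa [hx] using hcV

end IterSet

lemma tentMap_zeroI : tentMap zeroI = zeroI :=
  Subtype.ext (by norm_num [tentMap, zeroI])

lemma tentMap_iterate_eq_zeroI_of_mul_pow_eq_int (m : ℕ) (x : UnitI) (k : ℤ)
    (hx : (x : ℝ) * 2 ^ m = k) : tentMap^[m + 1] x = zeroI := by
  induction m generalizing x k with
  | zero =>
    rw [pow_zero, mul_one] at hx
    have hk0 : 0 ≤ k := by exact_mod_cast hx ▸ x.2.1
    have hk1 : k ≤ 1 := by exact_mod_cast hx ▸ x.2.2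
    obtain rfl | rfl : k = 0 ∨ k = 1 := by omega
    all_goals exact Subtype.ext (by norm_num [tentMap, zeroI, hx])
  | succ m ih =>
    rw [Function.iterate_succ_apply]
    refine ih (tentMap x) (min k (2 ^ (m + 1) - k)) ?_
    simp only [tentMap]
    push_cast
    rw [min_mul_of_nonneg _ _ (by positivity)]
    congr 1
    · linear_combination hx
    · linear_combination -hx

lemma exists_mul_pow_eq_int_dist_lt (u : UnitI) (m : ℕ) :
    ∃ x : UnitI, ∃ k : ℤ, (x : ℝ) * 2 ^ m = k ∧ dist x u < (1 / 2) ^ m := by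
  obtain ⟨hu0, hu1⟩ := u.2
  have hpow : (0 : ℝ) < 2 ^ m := by positivity
  set k := ⌊(u : ℝ) * 2 ^ m⌋
  have hku : (k : ℝ) / 2 ^ m ≤ u := (div_le_iff₀ hpow).2 (Int.floor_le _)
  have huk : (u : ℝ) - k / 2 ^ m < (1 / 2) ^ m := by
    rw [div_pow, one_pow, sub_lt_iff_lt_add, ← add_div, lt_div_iff₀ hpow]
    linarith [Int.lt_floor_add_one ((u : ℝ) * 2 ^ m)]
  refine ⟨⟨k / 2 ^ m, by positivity, hku.trans hu1⟩, k, div_mul_cancel₀ _ hpow.ne', ?_⟩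
  rw [Subtype.dist_eq, Real.dist_eq, abs_sub_comm, abs_of_nonneg (sub_nonneg.2 hku)]
  exact huk

lemma eventually_exists_tentMap_iterate_eq_zeroI (U : Set UnitI) (hU : IsOpen U)
    (hUne : U.Nonempty) : ∀ᶠ n in atTop, ∃ x ∈ U, tentMap^[n] x = zeroI := by
  obtain ⟨u, hu⟩ := hUne
  obtain ⟨ε, hε, hball⟩ := Metric.isOpen_iff.1 hU u hu
  obtain ⟨N, hN⟩ := exists_pow_lt_of_lt_one hε (by norm_num : (1 : ℝ) / 2 < 1)
  refine eventually_atTop.2 ⟨N + 1, fun n hn => ?_⟩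
  obtain ⟨m, rfl⟩ : ∃ m, n = m + 1 := ⟨n - 1, by omega⟩
  obtain ⟨x, k, hxk, hxu⟩ := exists_mul_pow_eq_int_dist_lt u m
  have hmN : ((1 : ℝ) / 2) ^ m ≤ (1 / 2) ^ N :=
    pow_le_pow_of_le_one (by norm_num) (by norm_num) (by omega)
  exact ⟨x, hball ((hxu.trans_le hmN).trans hN),
    tentMap_iterate_eq_zeroI_of_mul_pow_eq_int m x k hxk⟩

/-- Example: for `F = {f₁, f₂}` with `f₁ ≡ 0` and `f₂` the tent map on `[0,1]`, every point
of `F^n(x)` is either `0` or an `f₂`-iterate `f₂^j(x)` with `1 ≤ j ≤ n`, and `F` is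
topologically mixing in the multiple-mapping sense (with stable range `R(F²) = R(F¹)`). -/
theorem tent_zero_example :
    (∀ x : UnitI, ∀ n : ℕ, 1 ≤ n →
      iterSet ![zeroMap, tentMap] n x ⊆
        insert zeroI ((fun j : ℕ => tentMap^[j] x) '' Set.Icc 1 n)) ∧
    MixingMM ![zeroMap, tentMap] 1 := by
  refine ⟨fun x n hn => ?_, mixingMM_const_pair tentMap_zeroI
    eventually_exists_tentMap_iterate_eq_zeroI⟩
  exact (iterSet_const_pair_subset tentMap_zeroI n x).trans
    (insert_subset_insert (singleton_subset_iff.2 ⟨n, ⟨hn, le_rfl⟩, rfl⟩))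
end

section
/- Let f_1(x) = 2x for x ∈ [0,1/2], 2−2x for x ∈ (1/2,1] (the tent map) and f_2(x) = 1−2x for x ∈ [0,1/2], 2x−1 for x ∈ (1/2,1]. Then for every x ∈ [0,1] and every n ≥ 1, the set F^n(x) of all n-fold compositions of f_1, f_2 applied to x equals {f_1^n(x), f_2^n(x)}, and f_1^n(x) + f_2^n(x) = 1. -/
open Set Metric Filter TopologicalSpace

/-- The map `f₂(x) = 1 - 2x` on `[0,1/2]`, `2x - 1` on `(1/2,1]`, i.e. `|1 - 2x|`. -/
noncomputable def coTentMap : UnitI → UnitI := fun x =>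
  ⟨|1 - 2 * (x : ℝ)|, by
    obtain ⟨hx0, hx1⟩ := x.2
    exact ⟨abs_nonneg _, abs_le.mpr ⟨by linarith, by linarith⟩⟩⟩

lemma coTent_eq (x : UnitI) : (coTentMap x : ℝ) = 1 - (tentMap x : ℝ) := by
  simp only [tentMap, coTentMap]
  rcases le_total (1 - 2*(x:ℝ)) 0 with h | h
  · rw [abs_of_nonpos h, min_eq_right (by linarith)]; try ring
  · rw [abs_of_nonneg h, min_eq_left (by linarith)]; try ring

lemma tent_symm (y z : UnitI) (h : (y : ℝ) + (z : ℝ) = 1) : tentMap y = tentMap z := by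
  apply Subtype.ext
  simp only [tentMap]
  have hz : (z : ℝ) = 1 - (y : ℝ) := by linarith
  rw [hz]
  rw [show (2 : ℝ) * (1 - (y:ℝ)) = 2 - 2*(y:ℝ) by ring,
      show (2 : ℝ) - (2 - 2*(y:ℝ)) = 2*(y:ℝ) by ring, min_comm]

lemma coTent_symm (y z : UnitI) (h : (y : ℝ) + (z : ℝ) = 1) : coTentMap y = coTentMap z := by
  apply Subtype.ext
  simp only [coTentMap]
  have hz : (z : ℝ) = 1 - (y : ℝ) := by linarith
  rw [hz]
  rw [show (1 : ℝ) - 2*(1 - (y:ℝ)) = -(1 - 2*(y:ℝ)) by ring, abs_neg]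

/-- Example: for `F = {f₁, f₂}` with `f₁` the tent map and `f₂(x) = |1 - 2x|`, for every
`x ∈ [0,1]` and `n ≥ 1` the set `F^n(x)` of all `n`-fold compositions equals
`{f₁^n(x), f₂^n(x)}`, and `f₁^n(x) + f₂^n(x) = 1`. -/
theorem tent_coTent_example :
    ∀ x : UnitI, ∀ n : ℕ, 1 ≤ n →
      iterSet ![tentMap, coTentMap] n x = {tentMap^[n] x, coTentMap^[n] x} ∧
      ((tentMap^[n] x : ℝ) + (coTentMap^[n] x : ℝ)) = 1 := by
  intro x n hn
  induction n generalizing x with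
  | zero => omega
  | succ n ih =>
    rcases Nat.eq_zero_or_pos n with rfl | hn1
    · constructor
      · show (⋃ i, iterSet ![tentMap, coTentMap] 0 (![tentMap, coTentMap] i x)) = _
        ext y
        simp only [Set.mem_iUnion, iterSet, Set.mem_singleton_iff, Fin.exists_fin_two,
          Matrix.cons_val_zero, Matrix.cons_val_one, Matrix.head_cons,
          zero_add, Function.iterate_one, Set.mem_insert_iff]
      · simp only [zero_add, Function.iterate_one]
        have := coTent_eq x
        linarith
    · have key1 : (coTentMap x : ℝ) + (tentMap x : ℝ) = 1 := by
        have := coTent_eq x; linarith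
      have ht : tentMap (coTentMap x) = tentMap (tentMap x) := tent_symm _ _ (by linarith)
      have hc : coTentMap (coTentMap x) = coTentMap (tentMap x) := coTent_symm _ _ (by linarith)
      obtain ⟨ih1, ih2⟩ := ih (tentMap x) hn1
      obtain ⟨ih1', ih2'⟩ := ih (coTentMap x) hn1
      have hit : tentMap^[n] (coTentMap x) = tentMap^[n] (tentMap x) := by
        rcases Nat.exists_eq_add_of_le hn1 with ⟨k, rfl⟩
        rw [add_comm, Function.iterate_add_apply, Function.iterate_add_apply]
        simp only [Function.iterate_one, ht]
      have hic : coTentMap^[n] (coTentMap x) = coTentMap^[n] (tentMap x) := by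
        rcases Nat.exists_eq_add_of_le hn1 with ⟨k, rfl⟩
        rw [add_comm, Function.iterate_add_apply, Function.iterate_add_apply]
        simp only [Function.iterate_one, hc]
      constructor
      · show (⋃ i, iterSet ![tentMap, coTentMap] n (![tentMap, coTentMap] i x)) = _
        ext y
        simp only [Set.mem_iUnion, Fin.exists_fin_two, Matrix.cons_val_zero,
          Matrix.cons_val_one, Matrix.head_cons, ih1, ih1', hit, hic,
          Function.iterate_succ_apply, Set.mem_insert_iff, Set.mem_singleton_iff]
        tauto
      · rw [Function.iterate_succ_apply, Function.iterate_succ_apply, hic]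
        exact ih2
end

section
/- Let u be the infinite sequence obtained as the limit of the words A_n (A_1 = 10111, A_{n+1} = A_n O_n A_n I_n A_n with O_n all 0's and I_n all 1's of length 5^n), and let B be a finite word of length 5^n that is neither O_n nor I_n. Then for every k ≥ 10n+1, the frequency of occurrences of B as a subword of A_k satisfies (1/5^k)·#{0 ≤ i ≤ 5^k − 1 : A_k[i, i+5^n−1] = B} ≤ (4/5)^{k−10n}; in particular this frequency tends to 0 as k → ∞. -/
/-!
Let `N_k` count the occurrences of `B` (of length `m`) in `u` at positions `< 5^k`. Cut these
positions for `k + 1` into the five blocks of `A_{k+1} = A_k O_k A_k I_k A_k`. A window lying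
inside `O_k` or `I_k` is constant, hence is not `B`; a window lying inside a later copy of `A_k`
is a window of `A_k`; and each block has at most `m` windows sticking out of it. Hence
`N_{k+1} ≤ 3 N_k + 4m`, i.e. `N_{k+1} + 2m ≤ 3 (N_k + 2m)`. Starting from `N_n ≤ 5^n = m` this
gives `N_k ≤ 3^{k-n+1} 5^n`, and `3^{10} ≤ 5^9` turns this into `N_k ≤ 4^{k-10n} 5^{10n}`.
-/

/-- The words `A_n` over the alphabet `{0,1}` (`false = 0`, `true = 1`):
`A₁ = 10111` and `A_{n+1} = A_n O_n A_n I_n A_n`, where `O_n` (resp. `I_n`) is the constant-`0`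
(resp. constant-`1`) word of the same length as `A_n`. (`Aword 0` is a dummy value.) -/
def Aword : ℕ → List Bool
  | 0 => []
  | 1 => [true, false, true, true, true]
  | n + 2 =>
      Aword (n + 1) ++ List.replicate (Aword (n + 1)).length false ++ Aword (n + 1)
        ++ List.replicate (Aword (n + 1)).length true ++ Aword (n + 1)

/-- The one-sided infinite sequence `u` obtained as the limit of the words `A_n`
(each `A_n` is a prefix of `A_{n+1}`, and `A_{i+1}` has length `5^{i+1} > i`). -/
def useq : ℕ → Bool := fun i => (Aword (i + 1)).getD i false


open Nat List

lemma Aword_length {k : ℕ} (hk : 1 ≤ k) : (Aword k).length = 5 ^ k := by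
  induction k, hk using Nat.le_induction with
  | base => rfl
  | succ k hk ih =>
    obtain ⟨k, rfl⟩ := Nat.exists_eq_add_of_le' hk
    simp only [Aword, length_append, length_replicate, ih]
    ring

lemma Aword_succ {k : ℕ} (hk : 1 ≤ k) :
    Aword (k + 1) = Aword k ++ replicate (5 ^ k) false ++ Aword k ++
      replicate (5 ^ k) true ++ Aword k := by
  obtain ⟨k, rfl⟩ := Nat.exists_eq_add_of_le' hk
  rw [← Aword_length hk, Aword]

lemma Aword_prefix_Aword {k l : ℕ} (hk : 1 ≤ k) (hkl : k ≤ l) : Aword k <+: Aword l := by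
  induction l, hkl using Nat.le_induction with
  | base => exact prefix_refl _
  | succ l hkl ih =>
    rw [Aword_succ (hk.trans hkl), append_assoc, append_assoc, append_assoc]
    exact ih.trans (prefix_append _ _)

lemma getD_Aword_of_le {k l i : ℕ} (hk : 1 ≤ k) (hkl : k ≤ l) (hi : i < 5 ^ k) :
    (Aword l).getD i false = (Aword k).getD i false := by
  obtain ⟨w, hw⟩ := Aword_prefix_Aword hk hkl
  rw [← hw, getD_append _ _ _ _ (by rwa [Aword_length hk])]

lemma useq_eq_getD_Aword {k i : ℕ} (hk : 1 ≤ k) (hi : i < 5 ^ k) :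
    useq i = (Aword k).getD i false := by
  have hi' : i < 5 ^ (i + 1) := (Nat.lt_pow_self (by norm_num)).trans
    (Nat.pow_lt_pow_right (by norm_num) (by omega))
  rcases le_total k (i + 1) with h | h
  · exact getD_Aword_of_le hk h hi
  · exact (getD_Aword_of_le (by omega) h hi').symm

section Blocks

variable {k t : ℕ} (hk : 1 ≤ k) (ht : t < 5 ^ k)
include hk ht

lemma useq_pow_add : useq (5 ^ k + t) = false := by
  rw [useq_eq_getD_Aword (k := k + 1) (by omega) (by rw [pow_succ]; omega), Aword_succ hk]
  simp [getD_eq_getElem?_getD, getElem?_append, Aword_length hk, ht]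

lemma useq_two_mul_pow_add : useq (2 * 5 ^ k + t) = useq t := by
  rw [useq_eq_getD_Aword (k := k + 1) (by omega) (by rw [pow_succ]; omega), Aword_succ hk,
    useq_eq_getD_Aword hk ht, show 2 * 5 ^ k + t = 5 ^ k + (5 ^ k + t) by ring]
  simp [getD_eq_getElem?_getD, getElem?_append, Aword_length hk, ht]

lemma useq_three_mul_pow_add : useq (3 * 5 ^ k + t) = true := by
  rw [useq_eq_getD_Aword (k := k + 1) (by omega) (by rw [pow_succ]; omega), Aword_succ hk,
    show 3 * 5 ^ k + t = 5 ^ k + (5 ^ k + (5 ^ k + t)) by ring]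
  simp [getD_eq_getElem?_getD, getElem?_append, Aword_length hk, ht]

lemma useq_four_mul_pow_add : useq (4 * 5 ^ k + t) = useq t := by
  rw [useq_eq_getD_Aword (k := k + 1) (by omega) (by rw [pow_succ]; omega), Aword_succ hk,
    useq_eq_getD_Aword hk ht,
    show 4 * 5 ^ k + t = 5 ^ k + (5 ^ k + (5 ^ k + (5 ^ k + t))) by ring]
  simp [getD_eq_getElem?_getD, Aword_length hk, ht]

end Blocks

def OccursAt (B : List Bool) (i : ℕ) : Prop :=
  ∀ j < B.length, useq (i + j) = B.getD j false

instance (B : List Bool) : DecidablePred (OccursAt B) :=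
  fun _ => inferInstanceAs (Decidable (∀ _ < _, _))

lemma OccursAt.eq_replicate {B : List Bool} {i : ℕ} {b : Bool} (h : OccursAt B i)
    (hb : ∀ j < B.length, useq (i + j) = b) : B = replicate B.length b := by
  refine eq_replicate_iff.2 ⟨rfl, fun c hc => ?_⟩
  obtain ⟨j, hj, rfl⟩ := getElem_of_mem hc
  rw [← hb j hj, h j hj, getD_eq_getElem _ _ hj]

section Windows

variable {B : List Bool} {k t : ℕ} (hk : 1 ≤ k) (ht : t + B.length ≤ 5 ^ k)
include hk ht

lemma not_occursAt_pow_add (hB : B ≠ replicate B.length false) : ¬OccursAt B (5 ^ k + t) :=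
  fun h => hB <| h.eq_replicate fun j hj => by rw [add_assoc, useq_pow_add hk (by omega)]

lemma occursAt_two_mul_pow_add_iff : OccursAt B (2 * 5 ^ k + t) ↔ OccursAt B t :=
  forall₂_congr fun j hj => by rw [add_assoc, useq_two_mul_pow_add hk (by omega)]

lemma not_occursAt_three_mul_pow_add (hB : B ≠ replicate B.length true) :
    ¬OccursAt B (3 * 5 ^ k + t) :=
  fun h => hB <| h.eq_replicate fun j hj => by
    rw [add_assoc, useq_three_mul_pow_add hk (by omega)]

lemma occursAt_four_mul_pow_add_iff : OccursAt B (4 * 5 ^ k + t) ↔ OccursAt B t :=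
  forall₂_congr fun j hj => by rw [add_assoc, useq_four_mul_pow_add hk (by omega)]

end Windows

lemma Nat.count_le_count_add_of_imp {p q : ℕ → Prop} [DecidablePred p] [DecidablePred q]
    {L m : ℕ} (h : ∀ t, t + m ≤ L → q t → p t) : count q L ≤ count p L + m :=
  calc count q L ≤ count q (L - m + m) := count_monotone q (by omega)
    _ = count q (L - m) + count (fun t => q (L - m + t)) m := count_add q _ _
    _ ≤ count p (L - m) + m :=
      add_le_add (count_mono_left fun t ht => h t (by omega)) (count_le _)
    _ ≤ count p L + m := by gcongr; exact Nat.sub_le L m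

section Counting

variable {B : List Bool} (hB0 : B ≠ replicate B.length false) (hB1 : B ≠ replicate B.length true)
include hB0 hB1

lemma count_occursAt_pow_succ_le {k : ℕ} (hk : 1 ≤ k) :
    count (OccursAt B) (5 ^ (k + 1)) ≤ 3 * count (OccursAt B) (5 ^ k) + 4 * B.length := by
  have split₄ := count_add (OccursAt B) (4 * 5 ^ k) (5 ^ k)
  have split₃ := count_add (OccursAt B) (3 * 5 ^ k) (5 ^ k)
  have split₂ := count_add (OccursAt B) (2 * 5 ^ k) (5 ^ k)
  have split₁ := count_add (OccursAt B) (5 ^ k) (5 ^ k)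
  rw [show 4 * 5 ^ k + 5 ^ k = 5 ^ (k + 1) by ring] at split₄
  rw [show 3 * 5 ^ k + 5 ^ k = 4 * 5 ^ k by ring] at split₃
  rw [show 2 * 5 ^ k + 5 ^ k = 3 * 5 ^ k by ring] at split₂
  rw [← two_mul] at split₁
  have hO := count_le_count_add_of_imp (p := fun _ => False) (L := 5 ^ k)
    fun t ht h => not_occursAt_pow_add hk ht hB0 h
  have hA₂ := count_le_count_add_of_imp (p := OccursAt B) (L := 5 ^ k)
    fun t ht h => (occursAt_two_mul_pow_add_iff hk ht).1 h
  have hI := count_le_count_add_of_imp (p := fun _ => False) (L := 5 ^ k)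
    fun t ht h => not_occursAt_three_mul_pow_add hk ht hB1 h
  have hA₃ := count_le_count_add_of_imp (p := OccursAt B) (L := 5 ^ k)
    fun t ht h => (occursAt_four_mul_pow_add_iff hk ht).1 h
  simp only [count_false] at hO hI
  omega

lemma count_occursAt_pow_add_le {k : ℕ} (hk : 1 ≤ k) (d : ℕ) :
    count (OccursAt B) (5 ^ (k + d)) + 2 * B.length ≤
      3 ^ d * (count (OccursAt B) (5 ^ k) + 2 * B.length) := by
  induction d with
  | zero => simp
  | succ d ih =>
    calc count (OccursAt B) (5 ^ (k + d + 1)) + 2 * B.length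
        ≤ 3 * (count (OccursAt B) (5 ^ (k + d)) + 2 * B.length) := by
          have := count_occursAt_pow_succ_le hB0 hB1 (k := k + d) (by omega)
          omega
      _ ≤ 3 ^ (d + 1) * (count (OccursAt B) (5 ^ k) + 2 * B.length) := by
          rw [pow_succ']; nlinarith

end Counting

lemma three_pow_mul_five_pow_le {n : ℕ} (hn : 1 ≤ n) (e : ℕ) :
    3 ^ (9 * n + 1 + e) * 5 ^ n ≤ 4 ^ e * 5 ^ (10 * n) :=
  calc 3 ^ (9 * n + 1 + e) * 5 ^ n ≤ 3 ^ (10 * n + e) * 5 ^ n := by gcongr <;> omega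
    _ = (3 ^ 10) ^ n * 3 ^ e * 5 ^ n := by rw [pow_add, pow_mul]
    _ ≤ (5 ^ 9) ^ n * 4 ^ e * 5 ^ n := Nat.mul_le_mul_right _ <|
      Nat.mul_le_mul (Nat.pow_le_pow_left (by norm_num) n) (Nat.pow_le_pow_left (by norm_num) e)
    _ = 4 ^ e * 5 ^ (10 * n) := by rw [show 10 * n = 9 * n + n by ring, pow_add, pow_mul]; ring

lemma count_occursAt_div_le {n : ℕ} (hn : 1 ≤ n) {B : List Bool} (hB : B.length = 5 ^ n)
    (hB0 : B ≠ replicate B.length false) (hB1 : B ≠ replicate B.length true)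
    {k : ℕ} (hk : 10 * n + 1 ≤ k) :
    (count (OccursAt B) (5 ^ k) : ℝ) / 5 ^ k ≤ (4 / 5) ^ (k - 10 * n) := by
  obtain ⟨e, rfl⟩ : ∃ e, k = 10 * n + e := ⟨k - 10 * n, by omega⟩
  have hgrowth := count_occursAt_pow_add_le hB0 hB1 hn (9 * n + e)
  rw [show n + (9 * n + e) = 10 * n + e by ring, hB] at hgrowth
  have hbase : count (OccursAt B) (5 ^ n) ≤ 5 ^ n := count_le _
  have hcount : count (OccursAt B) (5 ^ (10 * n + e)) ≤ 4 ^ e * 5 ^ (10 * n) :=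
    calc count (OccursAt B) (5 ^ (10 * n + e)) ≤ 3 ^ (9 * n + e) * (3 * 5 ^ n) := by
          nlinarith [Nat.mul_le_mul_left (3 ^ (9 * n + e)) hbase]
      _ = 3 ^ (9 * n + 1 + e) * 5 ^ n := by ring
      _ ≤ 4 ^ e * 5 ^ (10 * n) := three_pow_mul_five_pow_le hn e
  rw [div_le_iff₀ (by positivity), Nat.add_sub_cancel_left]
  calc (count (OccursAt B) (5 ^ (10 * n + e)) : ℝ) ≤ 4 ^ e * 5 ^ (10 * n) := by
        exact_mod_cast hcount
    _ = (4 / 5) ^ e * 5 ^ (10 * n + e) := by rw [div_pow, pow_add]; field_simp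

/-- If `B` is a word of length `5^n` (with `n ≥ 1`) different from the constant words `O_n`
and `I_n`, then for every `k ≥ 10n + 1` the frequency of occurrences of `B` among the windows
of `u` starting at positions `0 ≤ i ≤ 5^k - 1` (i.e. in `A_k`, continued into `u`) is at most
`(4/5)^{k - 10n}`; in particular this frequency tends to `0` as `k → ∞`. -/
theorem subword_frequency_bound (n : ℕ) (hn : 1 ≤ n) (B : List Bool)
    (hB : B.length = 5 ^ n)
    (hB0 : B ≠ List.replicate (5 ^ n) false) (hB1 : B ≠ List.replicate (5 ^ n) true) :
    (∀ k : ℕ, 10 * n + 1 ≤ k →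
      (({i : ℕ | i < 5 ^ k ∧ ∀ j < 5 ^ n, useq (i + j) = B.getD j false}).ncard : ℝ) / 5 ^ k
        ≤ (4 / 5 : ℝ) ^ (k - 10 * n)) ∧
    Filter.Tendsto
      (fun k : ℕ =>
        (({i : ℕ | i < 5 ^ k ∧ ∀ j < 5 ^ n, useq (i + j) = B.getD j false}).ncard : ℝ) / 5 ^ k)
      Filter.atTop (nhds 0) := by
  have hncard (k : ℕ) : {i : ℕ | i < 5 ^ k ∧ ∀ j < 5 ^ n, useq (i + j) = B.getD j false}.ncard =
      count (OccursAt B) (5 ^ k) := by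
    rw [count_eq_card_filter_range, ← Set.ncard_coe_finset]
    congr 1
    ext i
    simp [OccursAt, hB]
  have hfreq (k : ℕ) (hk : 10 * n + 1 ≤ k) :=
    count_occursAt_div_le hn hB (hB ▸ hB0) (hB ▸ hB1) hk
  simp only [hncard]
  refine ⟨hfreq, squeeze_zero' (Filter.Eventually.of_forall fun k => by positivity)
    (Filter.eventually_atTop.2 ⟨_, hfreq⟩) ?_⟩
  exact (tendsto_pow_atTop_nhds_zero_of_lt_one (by norm_num) (by norm_num)).comp
    (Filter.tendsto_sub_atTop_nat _)
end

section
/- If a multiple mapping F on a compact metric space X (with R(F^{N+1}) = R(F^N) for some N and F(X) = X) is topologically mixing, then for every m ∈ ℕ the m-fold Cartesian product F × ⋯ × F is transitive; in particular mixing implies weakly mixing and weakly mixing implies transitivity. -/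
open Set Metric Filter TopologicalSpace

/-- If a multiple mapping `F` on a compact metric space (with stable range and `F(X) = X`)
is topologically mixing, then every finite Cartesian product `F × ⋯ × F` is transitive;
in particular mixing implies weak mixing (the case of two factors) and weak mixing implies
transitivity (one factor). -/
theorem mixing_implies_product_transitive {X : Type*} [MetricSpace X] [CompactSpace X]
    {m : ℕ} (hm : 0 < m) (f : Fin m → X → X) (hf : ∀ i, Continuous (f i)) (N : ℕ)
    (hstab : {S : Set X | ∃ x : X, S = iterSet f (N + 1) x}
      = {S : Set X | ∃ x : X, S = iterSet f N x})
    (hsurj : (⋃ x : X, iterSet f 1 x) = Set.univ)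
    (hmix : MixingMM f N) :
    ∀ r : ℕ, 1 ≤ r → ∀ U V : Fin r → Set X,
      (∀ i, IsOpen (U i)) → (∀ i, (U i).Nonempty) →
      (∀ i, IsOpen (V i)) → (∀ i, (V i).Nonempty) →
      (∀ i, ∃ z : X, iterSet f N z ⊆ V i) →
      ∃ n : ℕ, 0 < n ∧ ∀ i, ∃ x ∈ U i, iterSet f n x ⊆ V i := by
  intro r hr U V hUo hUne hVo hVne hz
  choose N' hpos hN' using fun i =>
    hmix (U i) (V i) (hUo i) (hUne i) (hVo i) (hVne i) (hz i)
  refine ⟨Finset.univ.sup N', ?_, fun i => hN' i _ (Finset.le_sup (Finset.mem_univ i))⟩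
  exact lt_of_lt_of_le (hpos ⟨0, hr⟩) (Finset.le_sup (Finset.mem_univ _))
end
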